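/- Let f, g be real polynomials with deg g = n, deg f ≤ n, and let h = f/g. Suppose λ ∈ ℝ is such that f - λg has n simple roots, none of which is a root of g. Then the signature of the symmetric Bezout matrix B(f,g) equals r₊ - r₋, where r₊ (resp. r₋) is the number of real roots q of f - λg with h'(q) > 0 (resp. h'(q) < 0). -/

import Mathlib

/-!
Let `q₁, …, qₙ` be the roots of `f - λg` and `V` their Vandermonde matrix. Then `V B Vᵀ` is the
matrix of values `Bez(qᵢ, qⱼ)` of the Bezoutian `Bez(t, s) = (f(t)g(s) - f(s)g(t))/(t - s)`.
Off the diagonal these vanish, since `f(qᵢ)g(qⱼ) = λg(qᵢ)g(qⱼ) = f(qⱼ)g(qᵢ)`, and on the diagonal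
`Bez(q, q) = f'(q)g(q) - f(q)g'(q) = g(q)² h'(q)`. Since the `qᵢ` are distinct, `V` is invertible,
so by Sylvester's law of inertia `B` has as many positive (negative) eigenvalues as there are
roots with `h' > 0` (`h' < 0`).
-/

open Polynomial

noncomputable def bezoutMatrixR (n : ℕ) (f g : Polynomial ℝ) : Matrix (Fin n) (Fin n) ℝ :=
  fun i j =>
    (((f.map C * C g - C f * g.map C) /ₘ (X - C X)).coeff i).coeff j

open Matrix Module
open scoped Polynomial.Bivariate

section Inertia

theorem Matrix.dotProduct_diagonal_mulVec_self {R ι : Type*} [CommSemiring R] [Fintype ι]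
    [DecidableEq ι] (d x : ι → R) : x ⬝ᵥ diagonal d *ᵥ x = ∑ i, d i * x i ^ 2 := by
  simp only [dotProduct, mulVec_diagonal]
  exact Finset.sum_congr rfl fun i _ => by ring

variable {𝕜 ι : Type*} [Field 𝕜] [LinearOrder 𝕜] [IsStrictOrderedRing 𝕜] [Fintype ι]
  [DecidableEq ι]

theorem finrank_le_card_pos_of_forall_ne_zero {V : Type*} [AddCommGroup V] [Module 𝕜 V]
    [FiniteDimensional 𝕜 V] (e : ι → 𝕜) (φ : V →ₗ[𝕜] ι → 𝕜)
    (hφ : ∀ v ≠ 0, 0 < φ v ⬝ᵥ diagonal e *ᵥ φ v) :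
    finrank 𝕜 V ≤ Fintype.card {i // 0 < e i} := by
  let ψ := LinearMap.funLeft 𝕜 𝕜 (Subtype.val : {i // 0 < e i} → ι) ∘ₗ φ
  have hψ : Function.Injective ψ := by
    refine (injective_iff_map_eq_zero ψ).2 fun v hv => by_contra fun hv0 => ?_
    have hnonpos : φ v ⬝ᵥ diagonal e *ᵥ φ v ≤ 0 := by
      rw [dotProduct_diagonal_mulVec_self]
      refine Finset.sum_nonpos fun i _ => ?_
      by_cases hi : 0 < e i
      · simp [show φ v i = 0 from congrFun hv ⟨i, hi⟩]
      · exact mul_nonpos_of_nonpos_of_nonneg (not_lt.1 hi) (sq_nonneg _)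
    exact (hφ v hv0).not_ge hnonpos
  simpa using LinearMap.finrank_le_finrank_of_injective hψ

variable {d e : ι → 𝕜} {A : Matrix ι ι 𝕜}

/- `x ↦ x ᵥ* A` maps the coordinate subspace spanned by the `i` with `0 < d i` to a space on
which the quadratic form of `diagonal e` is positive definite. -/
theorem card_pos_le_of_mul_diagonal_mul_transpose_eq (h : A * diagonal e * Aᵀ = diagonal d) :
    Fintype.card {i // 0 < d i} ≤ Fintype.card {i // 0 < e i} := by
  let ext := Function.ExtendByZero.linearMap 𝕜 (Subtype.val : {i // 0 < d i} → ι)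
  rw [← Module.finrank_fintype_fun_eq_card 𝕜]
  refine finrank_le_card_pos_of_forall_ne_zero e ((vecMulLinear A) ∘ₗ ext) fun v hv => ?_
  have hext : ∀ i : {i // 0 < d i}, ext v i = v i := fun i =>
    Subtype.val_injective.extend_apply _ _ i
  have hsupp : ∀ i, ¬ 0 < d i → d i * ext v i ^ 2 = 0 := fun i hi => by
    have hnot : ¬∃ j : {i // 0 < d i}, j.1 = i := by rintro ⟨j, rfl⟩; exact hi j.2
    simp [ext, Function.extend_apply' _ _ _ hnot]
  calc 0 < ∑ i : {i // 0 < d i}, d i * v i ^ 2 := by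
        obtain ⟨j, hj⟩ := Function.ne_iff.1 hv
        exact Finset.sum_pos' (fun i _ => mul_nonneg i.2.le (sq_nonneg _))
          ⟨j, Finset.mem_univ _, mul_pos j.2 (sq_pos_of_ne_zero hj)⟩
    _ = ∑ i, d i * ext v i ^ 2 := by
        rw [← Fintype.sum_subtype_add_sum_subtype (fun i => 0 < d i),
          Fintype.sum_eq_zero (fun i : {i // ¬ 0 < d i} => d i * ext v i ^ 2)
            fun i => hsupp i i.2, add_zero]
        simp only [hext]
    _ = ext v ⬝ᵥ (A * diagonal e * Aᵀ) *ᵥ ext v := by rw [h, dotProduct_diagonal_mulVec_self]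
    _ = _ := by
        simp only [LinearMap.comp_apply, vecMulLinear_apply, ← mulVec_mulVec, dotProduct_mulVec,
          mulVec_transpose]

theorem card_pos_eq_of_mul_diagonal_mul_transpose_eq (hA : IsUnit A)
    (h : A * diagonal e * Aᵀ = diagonal d) :
    Fintype.card {i // 0 < d i} = Fintype.card {i // 0 < e i} := by
  refine (card_pos_le_of_mul_diagonal_mul_transpose_eq h).antisymm
    (card_pos_le_of_mul_diagonal_mul_transpose_eq (A := A⁻¹) ?_)
  have hAinv : A⁻¹ * A = 1 := nonsing_inv_mul A ((isUnit_iff_isUnit_det A).1 hA)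
  calc A⁻¹ * diagonal d * A⁻¹ᵀ = (A⁻¹ * A) * diagonal e * (A⁻¹ * A)ᵀ := by
        simp only [← h, transpose_mul, Matrix.mul_assoc]
    _ = diagonal e := by simp [hAinv]

theorem card_neg_eq_of_mul_diagonal_mul_transpose_eq (hA : IsUnit A)
    (h : A * diagonal e * Aᵀ = diagonal d) :
    Fintype.card {i // d i < 0} = Fintype.card {i // e i < 0} := by
  have hneg : A * diagonal (fun i => -e i) * Aᵀ = diagonal (fun i => -d i) := by
    rw [← diagonal_neg, ← diagonal_neg, Matrix.mul_neg, Matrix.neg_mul, h]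
  simpa only [neg_pos] using card_pos_eq_of_mul_diagonal_mul_transpose_eq hA hneg

end Inertia

namespace Matrix.IsHermitian

variable {ι : Type*} [Fintype ι] [DecidableEq ι] {B V : Matrix ι ι ℝ} {d : ι → ℝ}

theorem eigenvectorUnitary_mul_diagonal_eigenvalues_mul_transpose (hB : B.IsHermitian) :
    (hB.eigenvectorUnitary : Matrix ι ι ℝ) * diagonal hB.eigenvalues *
      (hB.eigenvectorUnitary : Matrix ι ι ℝ)ᵀ = B := by
  conv_rhs => rw [hB.spectral_theorem]
  simp [Unitary.conjStarAlgAut_apply, star_eq_conjTranspose]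

theorem exists_isUnit_mul_diagonal_eigenvalues_mul_transpose_eq (hB : B.IsHermitian)
    (hV : IsUnit V) (h : V * B * Vᵀ = diagonal d) :
    ∃ A : Matrix ι ι ℝ, IsUnit A ∧ A * diagonal hB.eigenvalues * Aᵀ = diagonal d := by
  refine ⟨V * hB.eigenvectorUnitary, hV.mul Unitary.isUnit_coe, ?_⟩
  conv_rhs => rw [← h, ← hB.eigenvectorUnitary_mul_diagonal_eigenvalues_mul_transpose]
  simp only [transpose_mul, Matrix.mul_assoc]

theorem card_eigenvalues_pos_eq (hB : B.IsHermitian) (hV : IsUnit V)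
    (h : V * B * Vᵀ = diagonal d) :
    Fintype.card {i // 0 < hB.eigenvalues i} = Fintype.card {i // 0 < d i} := by
  obtain ⟨A, hA, hAd⟩ := hB.exists_isUnit_mul_diagonal_eigenvalues_mul_transpose_eq hV h
  exact (card_pos_eq_of_mul_diagonal_mul_transpose_eq hA hAd).symm

theorem card_eigenvalues_neg_eq (hB : B.IsHermitian) (hV : IsUnit V)
    (h : V * B * Vᵀ = diagonal d) :
    Fintype.card {i // hB.eigenvalues i < 0} = Fintype.card {i // d i < 0} := by
  obtain ⟨A, hA, hAd⟩ := hB.exists_isUnit_mul_diagonal_eigenvalues_mul_transpose_eq hV h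
  exact (card_neg_eq_of_mul_diagonal_mul_transpose_eq hA hAd).symm

end Matrix.IsHermitian

namespace Polynomial

variable {R : Type*} [CommRing R]

theorem eval_eq_sum_fin {p : R[X]} {n : ℕ} (hp : p.degree < n) (x : R) :
    p.eval x = ∑ i : Fin n, p.coeff i * x ^ (i : ℕ) := by
  rw [eval_eq_sum, ← sum_fin (fun e a => a * x ^ e) (fun _ => zero_mul _) hp]

theorem evalEval_eq_sum_fin {p : R[X][Y]} {n : ℕ} (hp : p.degree < n)
    (hcoeff : ∀ i, (p.coeff i).degree < n) (x y : R) :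
    p.evalEval x y =
      ∑ i : Fin n, ∑ j : Fin n, (p.coeff i).coeff j * x ^ (j : ℕ) * y ^ (i : ℕ) := by
  simp only [evalEval, eval_eq_sum_fin hp, eval_finsetSum, eval_mul, eval_pow, eval_C,
    eval_eq_sum_fin (hcoeff _), Finset.sum_mul]

theorem coeff_coeff_swap (p : R[X][Y]) (i j : ℕ) :
    ((Bivariate.swap p).coeff i).coeff j = (p.coeff j).coeff i := by
  induction p using Polynomial.induction_on' with
  | add p q hp hq => simp [hp, hq]
  | monomial n a =>
    rw [Bivariate.swap_monomial, coeff_mul_C, coeff_map, coeff_C_mul_X_pow, coeff_monomial]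
    split_ifs with h₁ h₂ h₂ <;> simp_all [eq_comm]

/-- `(f(Y)g(X) - f(X)g(Y)) / (Y - X)`; the coefficient of `Yⁱ Xʲ` is the entry `(i, j)` of
`bezoutMatrixR`. -/
noncomputable def bezoutian (f g : R[X]) : R[X][Y] :=
  (f.map C * C g - C f * g.map C) /ₘ (Y - C X)

variable (f g : R[X])

theorem Y_sub_C_X_mul_bezoutian :
    (Y - C X) * bezoutian f g = f.map C * C g - C f * g.map C := by
  have h := modByMonic_add_div (f.map C * C g - C f * g.map C) (Y - C X)
  rwa [modByMonic_X_sub_C_eq_C_eval, eval_sub, eval_mul, eval_mul, eval_map, eval₂_C_X, eval_C,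
    eval_C, eval_map, eval₂_C_X, mul_comm, sub_self, map_zero, zero_add] at h

theorem sub_mul_evalEval_bezoutian (x y : R) :
    (y - x) * (bezoutian f g).evalEval x y = f.eval y * g.eval x - f.eval x * g.eval y := by
  simpa [evalEval_map_C, evalEval_C] using congrArg (evalEval x y) (Y_sub_C_X_mul_bezoutian f g)

theorem evalEval_bezoutian_self (x : R) :
    (bezoutian f g).evalEval x x =
      (derivative f).eval x * g.eval x - f.eval x * (derivative g).eval x := by
  have h := congrArg (evalEval x x ∘ derivative) (Y_sub_C_X_mul_bezoutian f g)
  simpa [derivative_map, evalEval_map_C, evalEval_C] using h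

theorem swap_bezoutian : Bivariate.swap (bezoutian f g) = bezoutian f g := by
  refine (monic_X_sub_C (X : R[X])).isRegular.left ?_
  have h := congrArg Bivariate.swap (Y_sub_C_X_mul_bezoutian f g)
  simp only [map_mul, map_sub, Bivariate.swap_Y, Bivariate.swap_C,
    Bivariate.swap_map_C, map_X] at h
  linear_combination -h - Y_sub_C_X_mul_bezoutian f g

variable {f g} {n : ℕ}

theorem degree_bezoutian_lt (hf : f.natDegree ≤ n) (hg : g.natDegree ≤ n) :
    (bezoutian f g).degree < n := by
  nontriviality R
  set N := f.map C * C g - C f * g.map C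
  have hN : N.natDegree ≤ n := max_self n ▸ natDegree_sub_le_of_le
    ((natDegree_mul_C_le _ _).trans (natDegree_map_le.trans hf))
    ((natDegree_C_mul_le _ _).trans (natDegree_map_le.trans hg))
  rw [show bezoutian f g = N /ₘ (Y - C X) from rfl]
  rcases eq_or_ne N 0 with hN0 | hN0
  · simp [hN0]
  · calc (N /ₘ (Y - C X)).degree < N.degree :=
          degree_divByMonic_lt _ _ hN0 (by simp)
      _ ≤ n := degree_le_of_natDegree_le hN

theorem degree_coeff_bezoutian_lt (hf : f.natDegree ≤ n) (hg : g.natDegree ≤ n) (i : ℕ) :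
    ((bezoutian f g).coeff i).degree < n := by
  refine (degree_lt_iff_coeff_zero _ _).2 fun j hj => ?_
  rw [← swap_bezoutian, coeff_coeff_swap,
    coeff_eq_zero_of_degree_lt ((degree_bezoutian_lt hf hg).trans_le (by exact_mod_cast hj)),
    coeff_zero]

end Polynomial

variable {n : ℕ} {f g : ℝ[X]}

theorem vandermonde_mul_bezoutMatrixR_mul_transpose_apply (hf : f.natDegree ≤ n)
    (hg : g.natDegree ≤ n) (v : Fin n → ℝ) (i j : Fin n) :
    (vandermonde v * bezoutMatrixR n f g * (vandermonde v)ᵀ) i j =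
      (bezoutian f g).evalEval (v j) (v i) := by
  rw [evalEval_eq_sum_fin (degree_bezoutian_lt hf hg) (degree_coeff_bezoutian_lt hf hg)]
  simp only [mul_apply, transpose_apply, vandermonde_apply, Finset.sum_mul]
  rw [Finset.sum_comm]
  refine Finset.sum_congr rfl fun k _ => Finset.sum_congr rfl fun l _ => ?_
  rw [show bezoutMatrixR n f g k l = ((bezoutian f g).coeff k).coeff l from rfl]
  ring

theorem vandermonde_mul_bezoutMatrixR_mul_transpose_eq_diagonal (hf : f.natDegree ≤ n)
    (hg : g.natDegree ≤ n) {v : Fin n → ℝ} (hv : Function.Injective v) {lam : ℝ}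
    (hfiber : ∀ i, f.eval (v i) = lam * g.eval (v i)) :
    vandermonde v * bezoutMatrixR n f g * (vandermonde v)ᵀ =
      diagonal fun i => (derivative f).eval (v i) * g.eval (v i) -
        f.eval (v i) * (derivative g).eval (v i) := by
  ext i j
  rw [vandermonde_mul_bezoutMatrixR_mul_transpose_apply hf hg]
  rcases eq_or_ne i j with rfl | hij
  · rw [evalEval_bezoutian_self, diagonal_apply_eq]
  · rw [diagonal_apply_ne _ hij]
    refine (mul_eq_zero.1 ?_).resolve_left (sub_ne_zero.2 (hv.ne hij))
    rw [sub_mul_evalEval_bezoutian, hfiber, hfiber]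
    ring

theorem Fintype.card_subtype_eq_card_filter {α ι : Type*} [Fintype ι] {s : Finset α}
    (σ : ι ≃ s) {P : ι → Prop} {Q : α → Prop} [DecidablePred P] [DecidablePred Q]
    (h : ∀ i, P i ↔ Q (σ i)) :
    Fintype.card {i // P i} = (s.filter Q).card := by
  rw [Fintype.card_congr (σ.subtypeEquiv (q := fun x : s => Q x) h), Fintype.card_subtype,
    ← Finset.card_map (Function.Embedding.subtype _)]
  congr 1
  ext x
  simp [and_comm]

/-- If `λ ∈ ℝ` is such that `f - λg` has `n` simple (real) roots, none a root of `g`,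
then the signature of `B(f,g)` is `r₊ - r₋`, where `r₊` (resp. `r₋`) counts the real
roots `q` of `f - λg` with `h'(q) > 0` (resp. `< 0`), `h' = (f'g - fg')/g²`. -/
theorem bezout_signature_fiber (n : ℕ) (f g : Polynomial ℝ) (lam : ℝ)
    (hg : g.natDegree = n) (hf : f.natDegree ≤ n)
    (hcard : Multiset.card (f - C lam * g).roots = n)
    (hsimple : (f - C lam * g).roots.Nodup)
    (hnotg : ∀ q ∈ (f - C lam * g).roots, g.eval q ≠ 0)
    (hH : (bezoutMatrixR n f g).IsHermitian) :
    (Fintype.card {i : Fin n // 0 < hH.eigenvalues i} : ℤ)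
        - Fintype.card {i : Fin n // hH.eigenvalues i < 0}
      = (((f - C lam * g).roots.toFinset.filter
            (fun q => 0 < (f.derivative.eval q * g.eval q
                - f.eval q * g.derivative.eval q) / (g.eval q) ^ 2)).card : ℤ)
        - ((f - C lam * g).roots.toFinset.filter
            (fun q => (f.derivative.eval q * g.eval q
                - f.eval q * g.derivative.eval q) / (g.eval q) ^ 2 < 0)).card := by
  classical
  set p := f - C lam * g
  have hcard_toFinset : p.roots.toFinset.card = n := by
    rw [Multiset.toFinset_card_of_nodup hsimple, hcard]
  let σ : Fin n ≃ p.roots.toFinset := (p.roots.toFinset.equivFinOfCardEq hcard_toFinset).symm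
  let v : Fin n → ℝ := fun i => σ i
  have hv : Function.Injective v := Subtype.val_injective.comp σ.injective
  have hfiber (i : Fin n) : f.eval (v i) = lam * g.eval (v i) := by
    have := isRoot_of_mem_roots (Multiset.mem_toFinset.1 (σ i).2)
    simpa [p, sub_eq_zero] using this
  have hV : IsUnit (vandermonde v) :=
    (isUnit_iff_isUnit_det _).2 (isUnit_iff_ne_zero.2 (det_vandermonde_ne_zero_iff.2 hv))
  have hdiag := vandermonde_mul_bezoutMatrixR_mul_transpose_eq_diagonal hf hg.le hv hfiber
  have hg_sq_pos {q : ℝ} (hq : q ∈ p.roots.toFinset) : 0 < g.eval q ^ 2 :=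
    sq_pos_of_ne_zero (hnotg q (Multiset.mem_toFinset.1 hq))
  rw [hH.card_eigenvalues_pos_eq hV hdiag, hH.card_eigenvalues_neg_eq hV hdiag]
  congr 2
  · exact Fintype.card_subtype_eq_card_filter σ fun i =>
      (div_pos_iff_of_pos_right (hg_sq_pos (σ i).2)).symm
  · exact Fintype.card_subtype_eq_card_filter σ fun i => by
      rw [div_lt_iff₀ (hg_sq_pos (σ i).2), zero_mul]
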